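/- arXiv:2304.12801 — 6 statements merged into one kernel-verified Lean document; each statement's English description precedes it below -/
import Mathlib

section
/- If f and g are monotone C³ functions on [0,∞) with nonvanishing derivatives such that 1/√|f'| and 1/√|g'| are convex, then 1/√|(f∘g)'| is convex (where f∘g is defined, i.e. g maps into the domain of f). -/
/-!
With `u = 1/√|f'|` and `v = 1/√|g'|` the chain rule gives `1/√|(f ∘ g)'| = (u ∘ g) v`.
Differentiating `v⁻² = |g'|` gives `g'' v + 2 g' v' = 0`, which makes the cross terms in
the second derivative cancel: `((u ∘ g) v)'' = u''(g) g'² v + u(g) v'' ≥ 0` on `(0, ∞)`;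
convexity extends to the endpoint `0` by continuity.
-/

open Set Filter Topology

theorem HasDerivAt.one_div_sqrt_abs {q : ℝ → ℝ} {q' x : ℝ} (hq : HasDerivAt q q' x)
    (hx : q x ≠ 0) :
    HasDerivAt (fun y ↦ 1 / √|q y|) (-(q' / (2 * q x)) / √|q x|) x := by
  have habs : HasDerivAt (fun y ↦ |q y|) (SignType.sign (q x) * q') x :=
    (hasDerivAt_abs hx).comp x hq
  have hpos : 0 < √|q x| := Real.sqrt_pos.2 (abs_pos.2 hx)
  simp only [one_div]
  refine ((habs.sqrt (abs_ne_zero.2 hx)).inv hpos.ne').congr_deriv ?_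
  rw [Real.sq_sqrt (abs_nonneg _)]
  rcases hx.lt_or_gt with h | h
  · rw [sign_neg h, SignType.coe_neg_one, abs_of_neg h]
    field_simp
  · rw [sign_pos h, SignType.coe_one, abs_of_pos h]
    field_simp

theorem ContDiffOn.one_div_sqrt_abs {s : Set ℝ} {q : ℝ → ℝ} {n : ℕ∞}
    (hq : ContDiffOn ℝ n q s) (h0 : ∀ x ∈ s, q x ≠ 0) :
    ContDiffOn ℝ n (fun x ↦ 1 / √|q x|) s :=
  contDiffOn_const.div ((hq.abs h0).sqrt fun x hx ↦ abs_ne_zero.2 (h0 x hx))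
    fun x hx ↦ (Real.sqrt_pos.2 (abs_pos.2 (h0 x hx))).ne'

theorem ContDiffOn.one_div_sqrt_abs_derivWithin_comp {s t : Set ℝ} {f g : ℝ → ℝ}
    (hs : UniqueDiffOn ℝ s) (hf : ContDiffOn ℝ 3 f t) (hg : ContDiffOn ℝ 3 g s)
    (hgst : MapsTo g s t) (hf' : ∀ y ∈ t, derivWithin f t y ≠ 0)
    (hg' : ∀ x ∈ s, derivWithin g s x ≠ 0) :
    ContDiffOn ℝ 2 (fun x ↦ 1 / √|derivWithin (f ∘ g) s x|) s := by
  refine ((hf.comp hg hgst).derivWithin hs (by norm_num)).one_div_sqrt_abs (n := 2)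
    fun x hx ↦ ?_
  rw [derivWithin_comp x (hf.differentiableOn (by norm_num) _ (hgst hx))
    (hg.differentiableOn (by norm_num) x hx) hgst]
  exact mul_ne_zero (hf' _ (hgst hx)) (hg' x hx)

theorem ContDiffOn.hasDerivAt {s : Set ℝ} {f : ℝ → ℝ} {x : ℝ} {n : WithTop ℕ∞}
    (hf : ContDiffOn ℝ n f s) (hn : n ≠ 0) (hs : IsOpen s) (hx : x ∈ s) :
    HasDerivAt f (deriv f x) x :=
  ((hf.differentiableOn hn).differentiableAt (hs.mem_nhds hx)).hasDerivAt

theorem ContDiffOn.hasDerivAt_deriv {s : Set ℝ} {f : ℝ → ℝ} {x : ℝ}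
    (hf : ContDiffOn ℝ 2 f s) (hs : IsOpen s) (hx : x ∈ s) :
    HasDerivAt (deriv f) (deriv (deriv f) x) x :=
  (((hf.deriv_of_isOpen hs (by norm_num : (1 : WithTop ℕ∞) + 1 ≤ 2)).differentiableOn
    one_ne_zero).differentiableAt (hs.mem_nhds hx)).hasDerivAt

theorem ConvexOn.deriv_deriv_nonneg {s : Set ℝ} {f : ℝ → ℝ} {x : ℝ} (hf : ConvexOn ℝ s f)
    (hs : IsOpen s) (hfd : DifferentiableOn ℝ f s) (hx : x ∈ s) :
    0 ≤ deriv (deriv f) x := by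
  rw [← derivWithin_of_isOpen hs hx]
  exact (hf.monotoneOn_deriv fun y hy ↦ hfd.differentiableAt (hs.mem_nhds hy)).derivWithin_nonneg

theorem ConvexOn.of_interior {D : Set ℝ} {f : ℝ → ℝ} (hD : Convex ℝ D) (hf : ContinuousOn f D)
    (hfd : DifferentiableOn ℝ f (interior D)) (hfi : ConvexOn ℝ (interior D) f) :
    ConvexOn ℝ D f :=
  (hfi.monotoneOn_deriv fun _ hx ↦
    hfd.differentiableAt (isOpen_interior.mem_nhds hx)).convexOn_of_deriv hD hf hfd

theorem pos_of_nonneg_of_deriv_ne_zero {s : Set ℝ} {g : ℝ → ℝ} {x : ℝ} (hs : s ∈ 𝓝 x)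
    (hg : ∀ y ∈ s, 0 ≤ g y) (hx : deriv g x ≠ 0) : 0 < g x :=
  (hg x (mem_of_mem_nhds hs)).lt_of_ne fun h ↦
    hx (IsLocalMin.deriv_eq_zero <| mem_of_superset hs fun y hy ↦
      show g x ≤ g y from h ▸ hg y hy)

/-- The relation `g'' v + 2 g' v' = 0` kills the cross terms of
`((u ∘ g) v)'' = u''(g) g'² v + u'(g) (g'' v + 2 g' v') + u(g) v''`. -/
theorem ConvexOn.comp_mul_of_deriv_relation {s t : Set ℝ} {u v g : ℝ → ℝ} (hs : IsOpen s)
    (ht : IsOpen t) (hgst : MapsTo g s t) (hu : ConvexOn ℝ t u) (hu₂ : ContDiffOn ℝ 2 u t)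
    (hu₀ : ∀ y ∈ t, 0 ≤ u y) (hv : ConvexOn ℝ s v) (hv₂ : ContDiffOn ℝ 2 v s)
    (hv₀ : ∀ x ∈ s, 0 ≤ v x) (hg₂ : ContDiffOn ℝ 2 g s)
    (hgv : ∀ x ∈ s, deriv (deriv g) x * v x + 2 * deriv g x * deriv v x = 0) :
    ConvexOn ℝ s (fun x ↦ u (g x) * v x) := by
  refine convexOn_of_hasDerivWithinAt2_nonneg hv.1
    ((hu₂.continuousOn.comp hg₂.continuousOn hgst).mul hv₂.continuousOn)
    (f' := fun x ↦ deriv u (g x) * deriv g x * v x + u (g x) * deriv v x)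
    (f'' := fun x ↦ deriv (deriv u) (g x) * deriv g x ^ 2 * v x + u (g x) * deriv (deriv v) x)
    ?_ ?_ ?_ <;> rw [hs.interior_eq] <;> intro x hx
  · have hgx := hg₂.hasDerivAt two_ne_zero hs hx
    exact (((hu₂.hasDerivAt two_ne_zero ht (hgst hx)).comp x hgx).mul
      (hv₂.hasDerivAt two_ne_zero hs hx)).hasDerivWithinAt
  · have hgx := hg₂.hasDerivAt two_ne_zero hs hx
    have hd := ((((hu₂.hasDerivAt_deriv ht (hgst hx)).comp x hgx).mul
      (hg₂.hasDerivAt_deriv hs hx)).mul (hv₂.hasDerivAt two_ne_zero hs hx)).add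
      (((hu₂.hasDerivAt two_ne_zero ht (hgst hx)).comp x hgx).mul (hv₂.hasDerivAt_deriv hs hx))
    refine (hd.congr_deriv ?_).hasDerivWithinAt
    simp only [Function.comp_apply, Pi.mul_apply]
    linear_combination deriv u (g x) * hgv x hx
  · have hu'' := hu.deriv_deriv_nonneg ht (hu₂.differentiableOn two_ne_zero) (hgst hx)
    have hv'' := hv.deriv_deriv_nonneg hs (hv₂.differentiableOn two_ne_zero) hx
    have hugx := hu₀ _ (hgst hx)
    have hvx := hv₀ x hx
    positivity

theorem convexOn_one_div_sqrt_abs_deriv_comp {s t : Set ℝ} {f g : ℝ → ℝ} (hs : IsOpen s)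
    (ht : IsOpen t) (hf : ContDiffOn ℝ 3 f t) (hg : ContDiffOn ℝ 3 g s) (hgst : MapsTo g s t)
    (hf' : ∀ y ∈ t, deriv f y ≠ 0) (hg' : ∀ x ∈ s, deriv g x ≠ 0)
    (hfc : ConvexOn ℝ t (fun y ↦ 1 / √|deriv f y|))
    (hgc : ConvexOn ℝ s (fun x ↦ 1 / √|deriv g x|)) :
    ConvexOn ℝ s (fun x ↦ 1 / √|deriv (f ∘ g) x|) := by
  have hp : ContDiffOn ℝ 2 (deriv f) t := hf.deriv_of_isOpen ht (by norm_num)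
  have hq : ContDiffOn ℝ 2 (deriv g) s := hg.deriv_of_isOpen hs (by norm_num)
  have hgv : ∀ x ∈ s, deriv (deriv g) x * (1 / √|deriv g x|) +
      2 * deriv g x * deriv (fun x ↦ 1 / √|deriv g x|) x = 0 := by
    intro x hx
    rw [((hq.hasDerivAt two_ne_zero hs hx).one_div_sqrt_abs (hg' x hx)).deriv]
    have := hg' x hx
    field_simp
    ring
  refine (hfc.comp_mul_of_deriv_relation hs ht hgst (hp.one_div_sqrt_abs (n := 2) hf')
    (fun _ _ ↦ by positivity) hgc (hq.one_div_sqrt_abs (n := 2) hg') (fun _ _ ↦ by positivity)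
    (hg.of_le (by norm_num)) hgv).congr fun x hx ↦ ?_
  have hfd := (hf.differentiableOn (by norm_num)).differentiableAt (ht.mem_nhds (hgst hx))
  have hgd := (hg.differentiableOn (by norm_num)).differentiableAt (hs.mem_nhds hx)
  dsimp only
  rw [deriv_comp x hfd hgd, abs_mul, Real.sqrt_mul (abs_nonneg _), one_div_mul_one_div]

theorem gammaHalfConvex_comp_general (f g : ℝ → ℝ)
    (hf : ContDiffOn ℝ 3 f (Ici 0)) (hg : ContDiffOn ℝ 3 g (Ici 0))
    (hgmap : ∀ x ∈ Ici (0:ℝ), g x ∈ Ici (0:ℝ))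
    (hf' : ∀ x ∈ Ici (0:ℝ), derivWithin f (Ici 0) x ≠ 0)
    (hg' : ∀ x ∈ Ici (0:ℝ), derivWithin g (Ici 0) x ≠ 0)
    (hfc : ConvexOn ℝ (Ici 0) (fun x => 1 / Real.sqrt |derivWithin f (Ici 0) x|))
    (hgc : ConvexOn ℝ (Ici 0) (fun x => 1 / Real.sqrt |derivWithin g (Ici 0) x|)) :
    ConvexOn ℝ (Ici 0) (fun x => 1 / Real.sqrt |derivWithin (f ∘ g) (Ici 0) x|) := by
  have hW :=
    ContDiffOn.one_div_sqrt_abs_derivWithin_comp (uniqueDiffOn_Ici 0) hf hg hgmap hf' hg'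
  refine ConvexOn.of_interior (convex_Ici 0) hW.continuousOn
    ((hW.differentiableOn two_ne_zero).mono interior_subset) ?_
  rw [interior_Ici]
  have hderiv (F : ℝ → ℝ) : EqOn (derivWithin F (Ici 0)) (deriv F) (Ioi 0) := fun x hx ↦
    derivWithin_of_mem_nhds (Ici_mem_nhds hx)
  have hgammaHalf (F : ℝ → ℝ) : EqOn (fun x ↦ 1 / √|derivWithin F (Ici 0) x|)
      (fun x ↦ 1 / √|deriv F x|) (Ioi 0) := fun x hx ↦ by simp only [hderiv F hx]
  have hgpos : MapsTo g (Ioi 0) (Ioi 0) := fun x hx ↦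
    pos_of_nonneg_of_deriv_ne_zero (Ici_mem_nhds hx) hgmap
      (hderiv g hx ▸ hg' x (Ioi_subset_Ici_self hx))
  refine (convexOn_one_div_sqrt_abs_deriv_comp isOpen_Ioi isOpen_Ioi
    (hf.mono Ioi_subset_Ici_self) (hg.mono Ioi_subset_Ici_self) hgpos
    (fun y hy ↦ hderiv f hy ▸ hf' y (Ioi_subset_Ici_self hy))
    (fun x hx ↦ hderiv g hx ▸ hg' x (Ioi_subset_Ici_self hx))
    ((hfc.subset Ioi_subset_Ici_self (convex_Ioi 0)).congr (hgammaHalf f))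
    ((hgc.subset Ioi_subset_Ici_self (convex_Ioi 0)).congr (hgammaHalf g))).congr
    fun x hx ↦ (hgammaHalf _ hx).symm

/-- If `f, g` are monotone C³ functions on `[0,∞)` with nonvanishing derivatives
(mapping `[0,∞)` into itself, so the composition is defined) such that
`1/√|f'|` and `1/√|g'|` are convex, then `1/√|(f∘g)'|` is convex. -/
theorem gammaHalfConvex_comp (f g : ℝ → ℝ)
    (hf : ContDiffOn ℝ 3 f (Ici 0)) (hg : ContDiffOn ℝ 3 g (Ici 0))
    (hfmap : ∀ x ∈ Ici (0:ℝ), f x ∈ Ici (0:ℝ))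
    (hgmap : ∀ x ∈ Ici (0:ℝ), g x ∈ Ici (0:ℝ))
    (hfmono : MonotoneOn f (Ici 0) ∨ AntitoneOn f (Ici 0))
    (hgmono : MonotoneOn g (Ici 0) ∨ AntitoneOn g (Ici 0))
    (hf' : ∀ x ∈ Ici (0:ℝ), derivWithin f (Ici 0) x ≠ 0)
    (hg' : ∀ x ∈ Ici (0:ℝ), derivWithin g (Ici 0) x ≠ 0)
    (hfc : ConvexOn ℝ (Ici 0) (fun x => 1 / Real.sqrt |derivWithin f (Ici 0) x|))
    (hgc : ConvexOn ℝ (Ici 0) (fun x => 1 / Real.sqrt |derivWithin g (Ici 0) x|)) :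
    ConvexOn ℝ (Ici 0) (fun x => 1 / Real.sqrt |derivWithin (f ∘ g) (Ici 0) x|) :=
  gammaHalfConvex_comp_general f g hf hg hgmap hf' hg' hfc hgc
end

section
/- A strictly γ^{1/2}-convex function f : [0,∞) → [0,∞) has at most three fixed points. -/
/-!
Between two consecutive fixed points of `f` the mean value theorem gives a point where
`f' = 1`, i.e. where `1 / √|f'| = 1`. Four fixed points would therefore give three points at
which the strictly convex function `1 / √|f'|` takes the same value, which is impossible.
-/

open Set

theorem Set.encard_le_of_forall_strictMono {α : Type*} [LinearOrder α] {s : Set α} {n : ℕ}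
    (h : ∀ e : Fin (n + 1) → α, StrictMono e → (∀ i, e i ∈ s) → False) : s.encard ≤ n := by
  by_contra! hlt
  obtain ⟨t, hts, ht⟩ := exists_subset_encard_eq (Order.add_one_le_of_lt hlt)
  have htfin : t.Finite := finite_of_encard_eq_coe (k := n + 1) (by exact_mod_cast ht)
  have hcard : htfin.toFinset.card = n + 1 := by
    have := htfin.encard_eq_coe_toFinset_card
    rw [ht] at this
    exact_mod_cast this.symm
  refine h (htfin.toFinset.orderEmbOfFin hcard) (OrderEmbedding.strictMono _) fun i => hts ?_
  exact htfin.mem_toFinset.mp (htfin.toFinset.orderEmbOfFin_mem hcard i)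

theorem StrictConvexOn.false_of_eq_of_eq {𝕜 β : Type*} [Field 𝕜] [LinearOrder 𝕜]
    [IsStrictOrderedRing 𝕜] [AddCommMonoid β] [LinearOrder β] [IsOrderedAddMonoid β]
    [Module 𝕜 β] [PosSMulStrictMono 𝕜 β] {s : Set 𝕜} {g : 𝕜 → β}
    (hg : StrictConvexOn 𝕜 s g) {x y z : 𝕜} (hx : x ∈ s) (hz : z ∈ s) (hxy : x < y) (hyz : y < z)
    (hgx : g x = g y) (hgz : g z = g y) : False := by
  have := hg.lt_on_openSegment hx hz (hxy.trans hyz).ne (Ioo_subset_openSegment ⟨hxy, hyz⟩)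
  simp [hgx, hgz] at this

theorem exists_derivWithin_eq_slope_of_Icc_subset {f : ℝ → ℝ} {s : Set ℝ}
    (hf : DifferentiableOn ℝ f s) {a b : ℝ} (hab : a < b) (hs : Icc a b ⊆ s) :
    ∃ c ∈ Ioo a b, derivWithin f s c = (f b - f a) / (b - a) := by
  have hnhds : ∀ c ∈ Ioo a b, s ∈ nhds c := fun c hc =>
    Filter.mem_of_superset (Icc_mem_nhds hc.1 hc.2) hs
  obtain ⟨c, hc, hderiv⟩ := exists_deriv_eq_slope f hab (hf.continuousOn.mono hs)
    fun c hc => ((hf c (hs (Ioo_subset_Icc_self hc))).differentiableAt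
      (hnhds c hc)).differentiableWithinAt
  exact ⟨c, hc, (derivWithin_of_mem_nhds (hnhds c hc)).trans hderiv⟩

theorem exists_derivWithin_eq_one_of_isFixedPt {f : ℝ → ℝ} {s : Set ℝ}
    (hf : DifferentiableOn ℝ f s) {a b : ℝ} (hab : a < b) (hs : Icc a b ⊆ s)
    (ha : f a = a) (hb : f b = b) : ∃ c ∈ Ioo a b, derivWithin f s c = 1 := by
  obtain ⟨c, hc, hderiv⟩ := exists_derivWithin_eq_slope_of_Icc_subset hf hab hs
  exact ⟨c, hc, by rw [hderiv, ha, hb, div_self (sub_ne_zero.2 hab.ne')]⟩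

theorem strictGammaHalfConvex_atMostThreeFixedPoints_general (f : ℝ → ℝ)
    (hf : ContDiffOn ℝ 3 f (Ici 0))
    (hfc : StrictConvexOn ℝ (Ici 0) (fun x => 1 / Real.sqrt |derivWithin f (Ici 0) x|)) :
    {x : ℝ | 0 ≤ x ∧ f x = x}.encard ≤ 3 := by
  refine Set.encard_le_of_forall_strictMono fun e he hfix => ?_
  have hdiff : DifferentiableOn ℝ f (Ici 0) := hf.differentiableOn (by norm_num)
  have slope_one : ∀ i j : Fin 4, i < j →
      ∃ c ∈ Ioo (e i) (e j), 1 / Real.sqrt |derivWithin f (Ici 0) c| = 1 := fun i j hij => by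
    obtain ⟨c, hc, hderiv⟩ := exists_derivWithin_eq_one_of_isFixedPt hdiff (he hij)
      (Icc_subset_Ici_self.trans (Ici_subset_Ici.2 (hfix i).1)) (hfix i).2 (hfix j).2
    exact ⟨c, hc, by simp [hderiv]⟩
  obtain ⟨c₁, hc₁, hg₁⟩ := slope_one 0 1 (by decide)
  obtain ⟨c₂, hc₂, hg₂⟩ := slope_one 1 2 (by decide)
  obtain ⟨c₃, hc₃, hg₃⟩ := slope_one 2 3 (by decide)
  exact hfc.false_of_eq_of_eq ((hfix 0).1.trans hc₁.1.le) ((hfix 2).1.trans hc₃.1.le)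
    (hc₁.2.trans hc₂.1) (hc₂.2.trans hc₃.1) (hg₁.trans hg₂.symm) (hg₃.trans hg₂.symm)

/-- A strictly γ^{1/2}-convex function `f : [0,∞) → [0,∞)` (monotone, C³, `|f'| > 0`,
`1/√|f'|` strictly convex) has at most three fixed points. -/
theorem strictGammaHalfConvex_atMostThreeFixedPoints (f : ℝ → ℝ)
    (hf : ContDiffOn ℝ 3 f (Ici 0))
    (hfmap : ∀ x ∈ Ici (0:ℝ), f x ∈ Ici (0:ℝ))
    (hfmono : MonotoneOn f (Ici 0) ∨ AntitoneOn f (Ici 0))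
    (hf' : ∀ x ∈ Ici (0:ℝ), derivWithin f (Ici 0) x ≠ 0)
    (hfc : StrictConvexOn ℝ (Ici 0) (fun x => 1 / Real.sqrt |derivWithin f (Ici 0) x|)) :
    {x : ℝ | 0 ≤ x ∧ f x = x}.encard ≤ 3 :=
  strictGammaHalfConvex_atMostThreeFixedPoints_general f hf hfc
end

section
/- Let f be a strictly γ^{1/2}-convex, bounded function on [0,∞) with f(0) > 0. If every fixed point x of f satisfies f'(x) < 1, then f has exactly one fixed point. -/
open Set Filter Topology

/-- Let `f` be strictly γ^{1/2}-convex, bounded, positive on `[0,∞)` with `f 0 > 0`.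
If every fixed point `x` of `f` satisfies `f'(x) < 1`, then `f` has exactly one fixed
point. -/
theorem uniqueFixedPoint_of_slopeLtOne (f : ℝ → ℝ)
    (hf : ContDiffOn ℝ 3 f (Ici 0))
    (hpos : ∀ x ∈ Ici (0:ℝ), 0 < f x)
    (hf0 : 0 < f 0)
    (hbdd : ∃ M : ℝ, ∀ x ∈ Ici (0:ℝ), f x ≤ M)
    (hfmono : MonotoneOn f (Ici 0) ∨ AntitoneOn f (Ici 0))
    (hf' : ∀ x ∈ Ici (0:ℝ), derivWithin f (Ici 0) x ≠ 0)
    (hfc : StrictConvexOn ℝ (Ici 0) (fun x => 1 / Real.sqrt |derivWithin f (Ici 0) x|))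
    (hslope : ∀ x : ℝ, 0 ≤ x → f x = x → derivWithin f (Ici 0) x < 1) :
    ∃! x : ℝ, 0 ≤ x ∧ f x = x := by
  obtain ⟨M, hM⟩ := hbdd
  have hcont : ContinuousOn f (Ici 0) := hf.continuousOn
  set g : ℝ → ℝ := fun x => f x - x with hgdef
  have hgcont : ContinuousOn g (Ici 0) := hcont.sub continuousOn_id
  -- derivative of g
  have hder : ∀ x ∈ Ici (0:ℝ),
      HasDerivWithinAt g (derivWithin f (Ici 0) x - 1) (Ici 0) x := by
    intro x hx
    exact ((hf.differentiableOn (by norm_num) x hx).hasDerivWithinAt).sub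
      (hasDerivWithinAt_id x _)
  -- existence
  set t : ℝ := max M 0 + 1 with htdef
  have ht0 : (0:ℝ) ≤ t := by
    have := le_max_right M 0; simp only [htdef]; linarith
  have hft : f t ≤ t := by
    have h1 := hM t (mem_Ici.2 ht0)
    have h2 := le_max_left M 0
    simp only [htdef]; linarith
  have hmem : (0:ℝ) ∈ Icc (g t) (g 0) := by
    constructor
    · simp only [hgdef]; linarith
    · simp only [hgdef]; linarith
  obtain ⟨x₀, hx₀, hgx₀⟩ := intermediate_value_Icc' ht0
    (hgcont.mono (Icc_subset_Ici_self)) hmem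
  have hfx₀ : f x₀ = x₀ := by
    have : f x₀ - x₀ = 0 := hgx₀
    linarith
  -- key: no two fixed points
  have key : ∀ a b : ℝ, 0 ≤ a → f a = a → f b = b → a < b → False := by
    intro a b ha hfa hfb hab
    have hb : (0:ℝ) ≤ b := le_trans ha hab.le
    have hga : g a = 0 := by simp [hgdef, hfa]
    have hgb : g b = 0 := by simp [hgdef, hfb]
    have hda : derivWithin f (Ici 0) a - 1 < 0 := by
      have := hslope a ha hfa; linarith
    -- slopes near a tend to a negative number, so g is negative just right of a
    have hT : Tendsto (slope g a) (𝓝[Ici 0 \ {a}] a) (𝓝 (derivWithin f (Ici 0) a - 1)) :=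
      hasDerivWithinAt_iff_tendsto_slope.mp (hder a ha)
    have hsub : Ioo a b ⊆ Ici 0 \ {a} := by
      intro y hy
      exact ⟨le_trans ha hy.1.le, by simp [ne_of_gt hy.1]⟩
    have hT' : Tendsto (slope g a) (𝓝[Ioo a b] a) (𝓝 (derivWithin f (Ici 0) a - 1)) :=
      hT.mono_left (nhdsWithin_mono a hsub)
    haveI := left_nhdsWithin_Ioo_neBot hab
    have hev : ∀ᶠ y in 𝓝[Ioo a b] a, slope g a y < 0 :=
      hT'.eventually (gt_mem_nhds hda)
    obtain ⟨c, hslopec, hc⟩ :=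
      (hev.and (eventually_mem_nhdsWithin)).exists
    have hca : a < c := hc.1
    have hcb : c < b := hc.2
    have hgc : g c < 0 := by
      have hs : slope g a c = g c / (c - a) := by
        rw [slope_def_field, hga]; ring
      rw [hs] at hslopec
      by_contra h
      push_neg at h
      have : 0 ≤ g c / (c - a) := div_nonneg h (by linarith)
      linarith
    -- first zero of g after c
    set S : Set ℝ := {x ∈ Icc c b | g x = 0} with hSdef
    have hbS : b ∈ S := ⟨⟨hcb.le, le_refl b⟩, hgb⟩
    have hSne : S.Nonempty := ⟨b, hbS⟩
    have hSbdd : BddBelow S := ⟨c, fun y hy => hy.1.1⟩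
    have hSclosed : IsClosed S := by
      have : S = Icc c b ∩ g ⁻¹' {0} := by
        ext y; simp [hSdef, and_comm]
      rw [this]
      apply (hgcont.mono ?_).preimage_isClosed_of_isClosed isClosed_Icc isClosed_singleton
      intro y hy; exact le_trans (le_trans ha hca.le) hy.1
    set d : ℝ := sInf S with hddef
    have hdS : d ∈ S := hSclosed.csInf_mem hSne hSbdd
    have hdIcc : d ∈ Icc c b := hdS.1
    have hgd : g d = 0 := hdS.2
    have hcd : c < d := lt_of_le_of_ne hdIcc.1 (fun h => by rw [← h] at hgd; exact absurd hgd (ne_of_lt hgc))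
    have hd0 : (0:ℝ) ≤ d := le_trans (le_trans ha hca.le) hdIcc.1
    -- g is negative on [c, d)
    have hneg : ∀ y ∈ Ico c d, g y < 0 := by
      intro y hy
      rcases lt_trichotomy (g y) 0 with h | h | h
      · exact h
      · exfalso
        have : y ∈ S := ⟨⟨hy.1, le_trans hy.2.le hdIcc.2⟩, h⟩
        exact absurd (csInf_le hSbdd this) (not_le.2 hy.2)
      · exfalso
        have hseg : Icc c y ⊆ Ici 0 := fun z hz =>
          le_trans (le_trans ha hca.le) hz.1
        have : (0:ℝ) ∈ Icc (g c) (g y) := ⟨hgc.le, h.le⟩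
        obtain ⟨z, hz, hgz⟩ := intermediate_value_Icc hy.1 (hgcont.mono hseg) this
        have : z ∈ S := ⟨⟨hz.1, le_trans (le_trans hz.2 hy.2.le) hdIcc.2⟩, hgz⟩
        have := csInf_le hSbdd this
        have := lt_of_le_of_lt hz.2 hy.2
        linarith
    -- derivative at d
    have hfd : f d = d := by simp only [hgdef] at hgd; linarith
    have hdd : derivWithin f (Ici 0) d - 1 < 0 := by
      have := hslope d hd0 hfd; linarith
    have hT2 : Tendsto (slope g d) (𝓝[Ici 0 \ {d}] d) (𝓝 (derivWithin f (Ici 0) d - 1)) :=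
      hasDerivWithinAt_iff_tendsto_slope.mp (hder d hd0)
    have hsub2 : Ioo c d ⊆ Ici 0 \ {d} := fun y hy =>
      ⟨le_trans (le_trans ha hca.le) hy.1.le, by simp [ne_of_lt hy.2]⟩
    have hT2' : Tendsto (slope g d) (𝓝[Ioo c d] d) (𝓝 (derivWithin f (Ici 0) d - 1)) :=
      hT2.mono_left (nhdsWithin_mono d hsub2)
    haveI := right_nhdsWithin_Ioo_neBot hcd
    have hev2 : ∀ᶠ y in 𝓝[Ioo c d] d, 0 ≤ slope g d y := by
      filter_upwards [eventually_mem_nhdsWithin] with y hy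
      have hgy : g y < 0 := hneg y ⟨hy.1.le, hy.2⟩
      have : slope g d y = g y / (y - d) := by
        rw [slope_def_field, hgd]; ring
      rw [this]
      exact le_of_lt (div_pos_of_neg_of_neg hgy (by linarith [hy.2]))
    have := ge_of_tendsto hT2' hev2
    linarith
  refine ⟨x₀, ⟨hx₀.1, hfx₀⟩, ?_⟩
  rintro y ⟨hy0, hfy⟩
  rcases lt_trichotomy y x₀ with h | h | h
  · exact absurd (key y x₀ hy0 hfy hfx₀ h) (fun h => h)
  · exact h
  · exact absurd (key x₀ y hx₀.1 hfx₀ hfy h) (fun h => h)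
end

section
/- Let f be a strictly γ^{1/2}-convex, bounded function on [0,∞) with f(0) > 0. If some fixed point x of f satisfies f'(x) > 1, then f has exactly three fixed points, and the other two fixed points y and z satisfy f'(y) < 1 and f'(z) < 1. -/
/-!
Fixed points of `f` on `[0, ∞)` are the zeros of `f t - t`. Since `f' x > 1`, this function
changes sign across `x`, and as it is positive at `0` and negative far out (`f` is bounded), it
has a zero `y < x` and a zero `z > x`. By Rolle, `f' = 1` at some `c₁ ∈ (y, x)` and
`c₂ ∈ (x, z)`. A strictly convex function takes a given value at most twice and exceeds it outside
the two points, so `1 / √|f'| = 1` only at `c₁, c₂` and `1 / √|f'| > 1`, i.e. `|f'| < 1`, at `y`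
and `z`. A fourth fixed point would give a third zero of `f' - 1`.
-/

open Set

section SignChange

variable {g : ℝ → ℝ} {g' a b : ℝ}

theorem HasDerivAt.exists_mem_Ioo_neg_of_pos (hg : HasDerivAt g g' b) (hg' : 0 < g')
    (hb : g b = 0) (hab : a < b) : ∃ t ∈ Ioo a b, g t < 0 := by
  have hslope := (hasDerivAt_iff_tendsto_slope_left_right.1 hg).1
  obtain ⟨t, hpos, ht⟩ :=
    ((hslope.eventually (eventually_gt_nhds hg')).and (Ioo_mem_nhdsLT hab)).exists
  exact ⟨t, ht, neg_of_slope_pos ht.2 hpos hb⟩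

theorem HasDerivAt.exists_mem_Ioo_pos_of_pos (hg : HasDerivAt g g' a) (hg' : 0 < g')
    (ha : g a = 0) (hab : a < b) : ∃ t ∈ Ioo a b, 0 < g t := by
  have hslope := (hasDerivAt_iff_tendsto_slope_left_right.1 hg).2
  obtain ⟨t, hpos, ht⟩ :=
    ((hslope.eventually (eventually_gt_nhds hg')).and (Ioo_mem_nhdsGT hab)).exists
  exact ⟨t, ht, pos_of_slope_pos ht.1 hpos ha⟩

theorem exists_mem_Ioo_eq_zero_of_hasDerivAt_pos_right (hab : a < b)
    (hgc : ContinuousOn g (Icc a b)) (ha : 0 < g a) (hb : g b = 0) (hg : HasDerivAt g g' b)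
    (hg' : 0 < g') : ∃ w ∈ Ioo a b, g w = 0 := by
  obtain ⟨t, ht, hgt⟩ := hg.exists_mem_Ioo_neg_of_pos hg' hb hab
  obtain ⟨w, hw, hgw⟩ :=
    intermediate_value_Ioo' ht.1.le (hgc.mono (Icc_subset_Icc_right ht.2.le)) ⟨hgt, ha⟩
  exact ⟨w, ⟨hw.1, hw.2.trans ht.2⟩, hgw⟩

theorem exists_mem_Ioo_eq_zero_of_hasDerivAt_pos_left (hab : a < b)
    (hgc : ContinuousOn g (Icc a b)) (ha : g a = 0) (hb : g b < 0) (hg : HasDerivAt g g' a)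
    (hg' : 0 < g') : ∃ w ∈ Ioo a b, g w = 0 := by
  obtain ⟨t, ht, hgt⟩ := hg.exists_mem_Ioo_pos_of_pos hg' ha hab
  obtain ⟨w, hw, hgw⟩ :=
    intermediate_value_Ioo' ht.2.le (hgc.mono (Icc_subset_Icc_left ht.1.le)) ⟨hb, hgt⟩
  exact ⟨w, ⟨ht.1.trans hw.1, hw.2⟩, hgw⟩

end SignChange

section StrictConvex

variable {𝕜 : Type*} [Field 𝕜] [LinearOrder 𝕜] [IsStrictOrderedRing 𝕜] {s : Set 𝕜}
  {φ : 𝕜 → 𝕜} {a b t : 𝕜}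

theorem StrictConvexOn.lt_left_of_eq (hφ : StrictConvexOn 𝕜 s φ) (ht : t ∈ s) (hb : b ∈ s)
    (hta : t < a) (hab : a < b) (h : φ a = φ b) : φ a < φ t := by
  have := hφ.slope_strict_mono_adjacent ht hb hta hab
  rw [h, sub_self, zero_div, div_neg_iff] at this
  rcases this with ⟨-, hneg⟩ | ⟨hpos, -⟩
  · exact absurd hneg (sub_pos.2 hta).not_gt
  · linarith

theorem StrictConvexOn.lt_right_of_eq (hφ : StrictConvexOn 𝕜 s φ) (ha : a ∈ s) (ht : t ∈ s)
    (hab : a < b) (hbt : b < t) (h : φ a = φ b) : φ b < φ t := by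
  have := hφ.slope_strict_mono_adjacent ha ht hab hbt
  rw [h, sub_self, zero_div, div_pos_iff] at this
  rcases this with ⟨hpos, -⟩ | ⟨-, hneg⟩
  · linarith
  · exact absurd hneg (sub_pos.2 hbt).not_gt

end StrictConvex

theorem lt_one_of_one_lt_one_div_sqrt_abs {d : ℝ} (h : 1 < 1 / Real.sqrt |d|) : d < 1 := by
  have hsqrt : 0 < Real.sqrt |d| := by
    by_contra! h0
    rw [le_antisymm h0 (Real.sqrt_nonneg _), div_zero] at h
    exact absurd h zero_le_one.not_gt
  rw [lt_div_iff₀ hsqrt, one_mul, Real.sqrt_lt' one_pos, one_pow] at h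
  exact (le_abs_self d).trans_lt h

section FixedPoints

variable {f : ℝ → ℝ}

theorem hasDerivAt_derivWithin_Ici (hf : DifferentiableOn ℝ f (Ici 0)) {t : ℝ} (ht : 0 < t) :
    HasDerivAt f (derivWithin f (Ici 0) t) t := by
  have h := ((hf t ht.le).differentiableAt (Ici_mem_nhds ht)).hasDerivAt
  rwa [← h.hasDerivWithinAt.derivWithin (uniqueDiffOn_Ici 0 t ht.le)] at h

theorem exists_derivWithin_eq_one_of_fixed (hf : DifferentiableOn ℝ f (Ici 0)) {a b : ℝ}
    (ha : 0 ≤ a) (hab : a < b) (hfa : f a = a) (hfb : f b = b) :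
    ∃ c ∈ Ioo a b, derivWithin f (Ici 0) c = 1 := by
  obtain ⟨c, hc, hslope⟩ := exists_hasDerivAt_eq_slope f (derivWithin f (Ici 0)) hab
    (hf.continuousOn.mono (Icc_subset_Ici_iff hab.le |>.2 ha))
    fun t ht => hasDerivAt_derivWithin_Ici hf (ha.trans_lt ht.1)
  rw [hfa, hfb, div_self (sub_ne_zero.2 hab.ne')] at hslope
  exact ⟨c, hc, hslope⟩

theorem exists_fixed_mem_Ioo_of_one_lt_derivWithin (hf : DifferentiableOn ℝ f (Ici 0))
    (hf0 : 0 < f 0) {x : ℝ} (hx : 0 < x) (hxfix : f x = x)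
    (hxslope : 1 < derivWithin f (Ici 0) x) : ∃ y ∈ Ioo 0 x, f y = y := by
  obtain ⟨y, hy, hyfix⟩ := exists_mem_Ioo_eq_zero_of_hasDerivAt_pos_right (g := fun t => f t - t)
    hx ((hf.continuousOn.mono (Icc_subset_Ici_self)).sub continuousOn_id) (by simpa using hf0)
    (sub_eq_zero.2 hxfix) ((hasDerivAt_derivWithin_Ici hf hx).sub (hasDerivAt_id x))
    (sub_pos.2 hxslope)
  exact ⟨y, hy, sub_eq_zero.1 hyfix⟩

theorem exists_fixed_gt_of_one_lt_derivWithin (hf : DifferentiableOn ℝ f (Ici 0))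
    (hbdd : ∃ M : ℝ, ∀ t ∈ Ici (0:ℝ), f t ≤ M) {x : ℝ} (hx : 0 < x) (hxfix : f x = x)
    (hxslope : 1 < derivWithin f (Ici 0) x) : ∃ z, x < z ∧ f z = z := by
  obtain ⟨M, hM⟩ := hbdd
  set T := max x M + 1
  have hxT : x < T := by linarith [le_max_left x M]
  have hfT : f T < T := (hM T (by simp only [mem_Ici]; linarith)).trans_lt
    (by linarith [le_max_right x M])
  obtain ⟨z, hz, hzfix⟩ := exists_mem_Ioo_eq_zero_of_hasDerivAt_pos_left (g := fun t => f t - t)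
    hxT ((hf.continuousOn.mono (Icc_subset_Ici_iff hxT.le |>.2 hx.le)).sub continuousOn_id)
    (sub_eq_zero.2 hxfix) (sub_neg.2 hfT)
    ((hasDerivAt_derivWithin_Ici hf hx).sub (hasDerivAt_id x)) (sub_pos.2 hxslope)
  exact ⟨z, hz.1, sub_eq_zero.1 hzfix⟩

variable (hfc : StrictConvexOn ℝ (Ici 0) (fun t => 1 / Real.sqrt |derivWithin f (Ici 0) t|))
include hfc

theorem derivWithin_lt_one_of_lt {t a b : ℝ} (ht : 0 ≤ t) (hta : t < a) (hab : a < b)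
    (ha : derivWithin f (Ici 0) a = 1) (hb : derivWithin f (Ici 0) b = 1) :
    derivWithin f (Ici 0) t < 1 := by
  have := hfc.lt_left_of_eq ht (mem_Ici.2 (by linarith)) hta hab (by simp only [ha, hb])
  simp only [ha, abs_one, Real.sqrt_one, div_one] at this
  exact lt_one_of_one_lt_one_div_sqrt_abs this

theorem derivWithin_lt_one_of_gt {t a b : ℝ} (ha₀ : 0 ≤ a) (hab : a < b) (hbt : b < t)
    (ha : derivWithin f (Ici 0) a = 1) (hb : derivWithin f (Ici 0) b = 1) :
    derivWithin f (Ici 0) t < 1 := by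
  have := hfc.lt_right_of_eq ha₀ (mem_Ici.2 (by linarith)) hab hbt (by simp only [ha, hb])
  simp only [hb, abs_one, Real.sqrt_one, div_one] at this
  exact lt_one_of_one_lt_one_div_sqrt_abs this

theorem not_four_fixed (hf : DifferentiableOn ℝ f (Ici 0)) {p q r s : ℝ} (hp : 0 ≤ p)
    (hpq : p < q) (hqr : q < r) (hrs : r < s)
    (fp : f p = p) (fq : f q = q) (fr : f r = r) (fs : f s = s) : False := by
  obtain ⟨c₁, hc₁, hd₁⟩ := exists_derivWithin_eq_one_of_fixed hf hp hpq fp fq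
  obtain ⟨c₂, hc₂, hd₂⟩ := exists_derivWithin_eq_one_of_fixed hf (by linarith) hqr fq fr
  obtain ⟨c₃, hc₃, hd₃⟩ := exists_derivWithin_eq_one_of_fixed hf (by linarith) hrs fr fs
  have := derivWithin_lt_one_of_gt hfc (hp.trans hc₁.1.le) (hc₁.2.trans hc₂.1)
    (hc₂.2.trans hc₃.1) hd₁ hd₂
  exact this.ne hd₃

theorem setOf_fixed_eq_of_three (hf : DifferentiableOn ℝ f (Ici 0)) {x y z : ℝ} (hy : 0 ≤ y)
    (hyx : y < x) (hxz : x < z) (hyfix : f y = y) (hxfix : f x = x) (hzfix : f z = z) :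
    {t : ℝ | 0 ≤ t ∧ f t = t} = {x, y, z} := by
  ext t
  simp only [mem_ofPred_eq, mem_insert_iff, mem_singleton_iff]
  constructor
  · rintro ⟨ht, htfix⟩
    by_contra! hne
    obtain ⟨htx, hty, htz⟩ := hne
    rcases hty.lt_or_gt with hty | hyt
    · exact not_four_fixed hfc hf ht hty hyx hxz htfix hyfix hxfix hzfix
    rcases htx.lt_or_gt with htx | hxt
    · exact not_four_fixed hfc hf hy hyt htx hxz hyfix htfix hxfix hzfix
    rcases htz.lt_or_gt with htz | hzt
    · exact not_four_fixed hfc hf hy hyx hxt htz hyfix hxfix htfix hzfix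
    · exact not_four_fixed hfc hf hy hyx hxz hzt hyfix hxfix hzfix htfix
  · rintro (rfl | rfl | rfl)
    · exact ⟨hy.trans hyx.le, hxfix⟩
    · exact ⟨hy, hyfix⟩
    · exact ⟨(hy.trans hyx.le).trans hxz.le, hzfix⟩

end FixedPoints

theorem threeFixedPoints_of_slopeGtOne_general (f : ℝ → ℝ) (x : ℝ)
    (hf : ContDiffOn ℝ 3 f (Ici 0))
    (hf0 : 0 < f 0)
    (hbdd : ∃ M : ℝ, ∀ t ∈ Ici (0:ℝ), f t ≤ M)
    (hfc : StrictConvexOn ℝ (Ici 0) (fun t => 1 / Real.sqrt |derivWithin f (Ici 0) t|))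
    (hx : 0 ≤ x) (hxfix : f x = x)
    (hxslope : 1 < derivWithin f (Ici 0) x) :
    ∃ y z : ℝ, 0 ≤ y ∧ 0 ≤ z ∧ f y = y ∧ f z = z ∧
      x ≠ y ∧ x ≠ z ∧ y ≠ z ∧
      {t : ℝ | 0 ≤ t ∧ f t = t} = {x, y, z} ∧
      derivWithin f (Ici 0) y < 1 ∧ derivWithin f (Ici 0) z < 1 := by
  have hfd : DifferentiableOn ℝ f (Ici 0) := hf.differentiableOn (by norm_num)
  have hx₀ : 0 < x := hx.lt_of_ne fun h => by subst h; linarith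
  obtain ⟨y, ⟨hy₀, hyx⟩, hyfix⟩ :=
    exists_fixed_mem_Ioo_of_one_lt_derivWithin hfd hf0 hx₀ hxfix hxslope
  obtain ⟨z, hxz, hzfix⟩ := exists_fixed_gt_of_one_lt_derivWithin hfd hbdd hx₀ hxfix hxslope
  obtain ⟨c₁, hc₁, hd₁⟩ := exists_derivWithin_eq_one_of_fixed hfd hy₀.le hyx hyfix hxfix
  obtain ⟨c₂, hc₂, hd₂⟩ := exists_derivWithin_eq_one_of_fixed hfd hx hxz hxfix hzfix
  refine ⟨y, z, hy₀.le, by linarith, hyfix, hzfix, hyx.ne', hxz.ne, (hyx.trans hxz).ne,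
    setOf_fixed_eq_of_three hfc hfd hy₀.le hyx hxz hyfix hxfix hzfix,
    derivWithin_lt_one_of_lt hfc hy₀.le hc₁.1 (hc₁.2.trans hc₂.1) hd₁ hd₂,
    derivWithin_lt_one_of_gt hfc (hy₀.le.trans hc₁.1.le) (hc₁.2.trans hc₂.1) hc₂.2 hd₁ hd₂⟩

/-- Let `f` be strictly γ^{1/2}-convex, bounded, positive on `[0,∞)` with `f 0 > 0`.
If some fixed point `x` satisfies `f'(x) > 1`, then `f` has exactly three fixed points,
and the other two, `y` and `z`, satisfy `f'(y) < 1` and `f'(z) < 1`. -/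
theorem threeFixedPoints_of_slopeGtOne (f : ℝ → ℝ) (x : ℝ)
    (hf : ContDiffOn ℝ 3 f (Ici 0))
    (hpos : ∀ t ∈ Ici (0:ℝ), 0 < f t)
    (hf0 : 0 < f 0)
    (hbdd : ∃ M : ℝ, ∀ t ∈ Ici (0:ℝ), f t ≤ M)
    (hfmono : MonotoneOn f (Ici 0) ∨ AntitoneOn f (Ici 0))
    (hf' : ∀ t ∈ Ici (0:ℝ), derivWithin f (Ici 0) t ≠ 0)
    (hfc : StrictConvexOn ℝ (Ici 0) (fun t => 1 / Real.sqrt |derivWithin f (Ici 0) t|))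
    (hx : 0 ≤ x) (hxfix : f x = x)
    (hxslope : 1 < derivWithin f (Ici 0) x) :
    ∃ y z : ℝ, 0 ≤ y ∧ 0 ≤ z ∧ f y = y ∧ f z = z ∧
      x ≠ y ∧ x ≠ z ∧ y ≠ z ∧
      {t : ℝ | 0 ≤ t ∧ f t = t} = {x, y, z} ∧
      derivWithin f (Ici 0) y < 1 ∧ derivWithin f (Ici 0) z < 1 :=
  threeFixedPoints_of_slopeGtOne_general f x hf hf0 hbdd hfc hx hxfix hxslope
end

section
/- For any r ≥ 1 and a, b, c, d ≥ 0 with ad - bc ≠ 0 and cx^r + d > 0 on (0,∞), the function x ↦ (a x^r + b)/(c x^r + d) is γ^{1/2}-convex on (0,∞); moreover, if r > 1 it is strictly γ^{1/2}-convex. -/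
/-!
Writing `f(x) = (a x^r + b)/(c x^r + d)`, one has `f'(x) = (ad - bc) r x^(r-1) / (c x^r + d)^2`, hence
`1/√|f'(x)| = (c x^((r+1)/2) + d x^((1-r)/2)) / √|(ad - bc) r|`.
For `r ≥ 1` the two exponents lie outside `(0, 1)`, so this is a nonnegative combination of convex
powers, and it is strictly convex when `r > 1` because `c + d`, the
denominator at `x = 1`, is positive.
-/

open Set

theorem StrictConvexOn.const_mul {𝕜 E : Type*} [Field 𝕜] [LinearOrder 𝕜] [IsStrictOrderedRing 𝕜]
    [AddCommMonoid E] [Module 𝕜 E] {s : Set E} {f : E → 𝕜} {c : 𝕜} (hc : 0 < c)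
    (hf : StrictConvexOn 𝕜 s f) : StrictConvexOn 𝕜 s fun x => c * f x :=
  ⟨hf.1, fun x hx y hy hxy a b ha hb hab => by
    simpa only [smul_eq_mul, mul_add, mul_left_comm c] using
      mul_lt_mul_of_pos_left (hf.2 hx hy hxy ha hb hab) hc⟩

namespace Real

theorem strictConvexOn_rpow_of_neg {p : ℝ} (hp : p < 0) :
    StrictConvexOn ℝ (Ioi 0) fun x : ℝ => x ^ p := by
  refine strictConvexOn_of_deriv2_pos (convex_Ioi 0)
    (continuousOn_id.rpow_const fun x hx => Or.inl (ne_of_gt hx)) fun x hx => ?_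
  rw [interior_Ioi] at hx
  have hpoch : (descPochhammer ℝ 2).eval p = p * (p - 1) := by
    simp [descPochhammer_succ_right]
  rw [iter_deriv_rpow_const, hpoch]
  exact mul_pos (mul_pos_of_neg_of_neg hp (by linarith)) (rpow_pos_of_pos hx _)

theorem convexOn_rpow_of_nonpos {p : ℝ} (hp : p ≤ 0) :
    ConvexOn ℝ (Ioi 0) fun x : ℝ => x ^ p := by
  rcases hp.lt_or_eq with hp | rfl
  · exact (strictConvexOn_rpow_of_neg hp).convexOn
  · simpa only [rpow_zero] using convexOn_const (1 : ℝ) (convex_Ioi 0)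

theorem convexOn_mul_rpow_add_mul_rpow {c d p q : ℝ} (hc : 0 ≤ c) (hd : 0 ≤ d) (hp : 1 ≤ p)
    (hq : q ≤ 0) : ConvexOn ℝ (Ioi 0) fun x : ℝ => c * x ^ p + d * x ^ q := by
  have hcp := ((convexOn_rpow hp).subset Ioi_subset_Ici_self (convex_Ioi 0)).smul hc
  have hdq := (convexOn_rpow_of_nonpos hq).smul hd
  exact hcp.add hdq

theorem strictConvexOn_mul_rpow_add_mul_rpow {c d p q : ℝ} (hc : 0 ≤ c) (hd : 0 ≤ d)
    (hcd : 0 < c + d) (hp : 1 < p) (hq : q < 0) :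
    StrictConvexOn ℝ (Ioi 0) fun x : ℝ => c * x ^ p + d * x ^ q := by
  have hxp := (strictConvexOn_rpow hp).subset Ioi_subset_Ici_self (convex_Ioi 0)
  rcases hc.lt_or_eq with hc | rfl
  · exact (hxp.const_mul hc).add_convexOn ((convexOn_rpow_of_nonpos hq.le).smul hd)
  · have hd : 0 < d := by linarith
    exact (hxp.convexOn.smul le_rfl).add_strictConvexOn
      ((strictConvexOn_rpow_of_neg hq).const_mul hd)

theorem hasDerivAt_rpow_div_rpow {a b c d r x : ℝ} (hx : x ≠ 0) (hden : c * x ^ r + d ≠ 0) :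
    HasDerivAt (fun y => (a * y ^ r + b) / (c * y ^ r + d))
      ((a * d - b * c) * r * x ^ (r - 1) / (c * x ^ r + d) ^ 2) x := by
  have hpow := hasDerivAt_rpow_const (p := r) (Or.inl hx)
  exact (((hpow.const_mul a).add_const b).div ((hpow.const_mul c).add_const d) hden).congr_deriv
    (by ring)

theorem one_div_sqrt_abs_mul_rpow_div_sq {k c d r x : ℝ} (hx : 0 < x) (hden : 0 < c * x ^ r + d) :
    1 / √|k * x ^ (r - 1) / (c * x ^ r + d) ^ 2|
      = c / √|k| * x ^ ((r + 1) / 2) + d / √|k| * x ^ ((1 - r) / 2) := by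
  have hsqrt : √|k * x ^ (r - 1) / (c * x ^ r + d) ^ 2|
      = √|k| * x ^ ((r - 1) / 2) / (c * x ^ r + d) := by
    rw [abs_div, abs_mul, abs_of_pos (rpow_pos_of_pos hx _), abs_sq, sqrt_div' _ (sq_nonneg _),
      sqrt_sq hden.le, sqrt_mul (abs_nonneg k), sqrt_eq_rpow (x ^ _), ← rpow_mul hx.le]
    ring_nf
  have hexp : x ^ ((r - 1) / 2) * x ^ ((1 - r) / 2) = 1 := by
    rw [← rpow_add hx, show (r - 1) / 2 + (1 - r) / 2 = 0 by ring, rpow_zero]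
  have hexp' : x ^ ((r + 1) / 2) = x ^ r * x ^ ((1 - r) / 2) := by
    rw [← rpow_add hx, show r + (1 - r) / 2 = (r + 1) / 2 by ring]
  rw [hsqrt, hexp', eq_inv_of_mul_eq_one_right hexp]
  rcases (abs_nonneg k).lt_or_eq with hk | hk
  · field_simp
  · simp [← hk]

end Real

theorem hill_gammaHalfConvex_general (r a b c d : ℝ)
    (hr : 1 ≤ r) (hc : 0 ≤ c) (hd : 0 ≤ d)
    (hdet : a * d - b * c ≠ 0)
    (hden : ∀ x ∈ Ioi (0:ℝ), 0 < c * x ^ r + d) :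
    ((∀ x ∈ Ioi (0:ℝ),
        derivWithin (fun y => (a * y ^ r + b) / (c * y ^ r + d)) (Ioi 0) x ≠ 0) ∧
      ConvexOn ℝ (Ioi 0) (fun x =>
        1 / Real.sqrt |derivWithin (fun y => (a * y ^ r + b) / (c * y ^ r + d)) (Ioi 0) x|)) ∧
    (1 < r →
      StrictConvexOn ℝ (Ioi 0) (fun x =>
        1 / Real.sqrt |derivWithin (fun y => (a * y ^ r + b) / (c * y ^ r + d)) (Ioi 0) x|)) := by
  have hderiv : ∀ x ∈ Ioi (0:ℝ),
      derivWithin (fun y => (a * y ^ r + b) / (c * y ^ r + d)) (Ioi 0) x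
        = (a * d - b * c) * r * x ^ (r - 1) / (c * x ^ r + d) ^ 2 := fun x hx => by
    rw [derivWithin_of_isOpen isOpen_Ioi hx]
    exact (Real.hasDerivAt_rpow_div_rpow (ne_of_gt hx) (hden x hx).ne').deriv
  set K := √|(a * d - b * c) * r|
  have hK : 0 < K := Real.sqrt_pos.2 (abs_pos.2 (mul_ne_zero hdet (by positivity)))
  have hformula : EqOn (fun x => c / K * x ^ ((r + 1) / 2) + d / K * x ^ ((1 - r) / 2))
      (fun x => 1 / √|derivWithin (fun y => (a * y ^ r + b) / (c * y ^ r + d)) (Ioi 0) x|)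
      (Ioi 0) := fun x hx => by
    simp only [hderiv x hx, Real.one_div_sqrt_abs_mul_rpow_div_sq hx (hden x hx), K]
  refine ⟨⟨fun x hx => ?_, ?_⟩, fun hr1 => ?_⟩
  · rw [hderiv x hx]
    have hxr := Real.rpow_pos_of_pos hx (r - 1)
    exact div_ne_zero (mul_ne_zero (mul_ne_zero hdet (by positivity)) hxr.ne')
      (pow_pos (hden x hx) 2).ne'
  · exact (Real.convexOn_mul_rpow_add_mul_rpow (by positivity) (by positivity) (by linarith)
      (by linarith)).congr hformula
  · have hcd : 0 < c + d := by simpa using hden 1 (mem_Ioi.2 one_pos)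
    exact (Real.strictConvexOn_mul_rpow_add_mul_rpow (by positivity) (by positivity)
      (by rw [← add_div]; positivity) (by linarith) (by linarith)).congr hformula

/-- For `r ≥ 1` and `a, b, c, d ≥ 0` with `ad - bc ≠ 0` and `c x^r + d > 0` on `(0,∞)`,
the function `x ↦ (a x^r + b)/(c x^r + d)` is γ^{1/2}-convex on `(0,∞)` (nonvanishing
derivative and `1/√|·'|` convex); moreover if `r > 1` it is strictly γ^{1/2}-convex. -/
theorem hill_gammaHalfConvex (r a b c d : ℝ)
    (hr : 1 ≤ r) (ha : 0 ≤ a) (hb : 0 ≤ b) (hc : 0 ≤ c) (hd : 0 ≤ d)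
    (hdet : a * d - b * c ≠ 0)
    (hden : ∀ x ∈ Ioi (0:ℝ), 0 < c * x ^ r + d) :
    ((∀ x ∈ Ioi (0:ℝ),
        derivWithin (fun y => (a * y ^ r + b) / (c * y ^ r + d)) (Ioi 0) x ≠ 0) ∧
      ConvexOn ℝ (Ioi 0) (fun x =>
        1 / Real.sqrt |derivWithin (fun y => (a * y ^ r + b) / (c * y ^ r + d)) (Ioi 0) x|)) ∧
    (1 < r →
      StrictConvexOn ℝ (Ioi 0) (fun x =>
        1 / Real.sqrt |derivWithin (fun y => (a * y ^ r + b) / (c * y ^ r + d)) (Ioi 0) x|)) :=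
  hill_gammaHalfConvex_general r a b c d hr hc hd hdet hden
end

section
/- Let d ≥ 3 and p > 0. All complex numbers of the form p^{1/d}·e^{(2k+1)πi/d} − 1 (k = 0,…,d−1) have strictly negative real part if and only if p < 1/cos(π/d)^d; and at least one has strictly positive real part if p > 1/cos(π/d)^d. -/
/-- For `d ≥ 3` and `p > 0`: all numbers `p^{1/d} e^{(2k+1)πi/d} - 1` (`k = 0,…,d-1`)
have strictly negative real part iff `p < 1/cos(π/d)^d`; and if `p > 1/cos(π/d)^d`,
then at least one of them has strictly positive real part. -/
theorem odd_loop_stability_criterion (d : ℕ) (hd : 3 ≤ d) (p : ℝ) (hp : 0 < p) :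
    ((∀ k : Fin d,
        (((p ^ ((d : ℝ)⁻¹) : ℝ) : ℂ)
            * Complex.exp ((2 * ((k : ℕ) : ℂ) + 1) * (Real.pi : ℂ) * Complex.I / (d : ℂ))
          - 1).re < 0)
      ↔ p < 1 / Real.cos (Real.pi / d) ^ d) ∧
    (1 / Real.cos (Real.pi / d) ^ d < p →
      ∃ k : Fin d,
        0 < (((p ^ ((d : ℝ)⁻¹) : ℝ) : ℂ)
            * Complex.exp ((2 * ((k : ℕ) : ℂ) + 1) * (Real.pi : ℂ) * Complex.I / (d : ℂ))
          - 1).re) := by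
  have hπ := Real.pi_pos
  have hd0 : (0:ℝ) < d := by exact_mod_cast lt_of_lt_of_le (by norm_num) hd
  have hd2 : (2:ℝ) < d := by exact_mod_cast lt_of_lt_of_le (by norm_num) hd
  set a : ℝ := p ^ ((d : ℝ)⁻¹) with ha
  set c : ℝ := Real.cos (Real.pi / d) with hc
  have hπd_pos : 0 < Real.pi / d := div_pos hπ hd0
  have hπd_lt : Real.pi / d < Real.pi / 2 := div_lt_div_of_pos_left hπ (by norm_num) hd2
  have hcpos : 0 < c := Real.cos_pos_of_mem_Ioo ⟨by linarith, hπd_lt⟩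
  have hapos : 0 < a := Real.rpow_pos_of_pos hp _
  have had : a ^ d = p := Real.rpow_inv_natCast_pow hp.le (by omega)
  -- real part computation
  have hre : ∀ k : Fin d,
      (((a : ℝ) : ℂ)
            * Complex.exp ((2 * ((k : ℕ) : ℂ) + 1) * (Real.pi : ℂ) * Complex.I / (d : ℂ))
          - 1).re = a * Real.cos ((2 * (k:ℕ) + 1) * Real.pi / d) - 1 := by
    intro k
    have harg : (2 * ((k : ℕ) : ℂ) + 1) * (Real.pi : ℂ) * Complex.I / (d : ℂ)
        = (((2 * (k:ℕ) + 1) * Real.pi / d : ℝ) : ℂ) * Complex.I := by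
      push_cast
      field_simp
    rw [harg, Complex.exp_mul_I]
    simp only [Complex.sub_re, Complex.mul_re, Complex.add_re, Complex.add_im,
      Complex.mul_im, Complex.cos_ofReal_re, Complex.cos_ofReal_im,
      Complex.sin_ofReal_re, Complex.sin_ofReal_im, Complex.I_re, Complex.I_im,
      Complex.ofReal_re, Complex.ofReal_im, Complex.one_re]
    ring
  -- cosine bound
  have hcosle : ∀ k : Fin d, Real.cos ((2 * (k:ℕ) + 1) * Real.pi / d) ≤ c := by
    intro k
    set θ : ℝ := (2 * (k:ℕ) + 1) * Real.pi / d with hθ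
    have hk0 : (0:ℝ) ≤ ((k:ℕ):ℝ) := Nat.cast_nonneg _
    have h1 : Real.pi / d ≤ θ := by
      rw [hθ, div_le_div_iff₀ hd0 hd0]
      nlinarith [mul_nonneg (mul_nonneg (by linarith : (0:ℝ) ≤ 2 * ((k:ℕ):ℝ)) hπ.le) hd0.le]
    have hk : ((k:ℕ):ℝ) ≤ (d:ℝ) - 1 := by
      have : ((k:ℕ):ℝ) + 1 ≤ (d:ℝ) := by exact_mod_cast Nat.succ_le_of_lt k.isLt
      linarith
    have hsum : θ + Real.pi / d = (2 * ((k:ℕ):ℝ) + 2) * Real.pi / d := by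
      rw [hθ]; ring
    have h2 : θ ≤ 2 * Real.pi - Real.pi / d := by
      have hle : (2 * ((k:ℕ):ℝ) + 2) * Real.pi / d ≤ 2 * Real.pi := by
        rw [div_le_iff₀ hd0]
        nlinarith [mul_le_mul_of_nonneg_right (show (2 * ((k:ℕ):ℝ) + 2) ≤ 2 * d by linarith) hπ.le]
      linarith [hsum ▸ hle]
    by_cases hmid : θ ≤ Real.pi
    · exact Real.cos_le_cos_of_nonneg_of_le_pi hπd_pos.le hmid h1
    · have hθeq : Real.cos θ = Real.cos (2 * Real.pi - θ) := by
        rw [Real.cos_sub]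
        simp [Real.cos_two_pi, Real.sin_two_pi]
      rw [hθeq]
      exact Real.cos_le_cos_of_nonneg_of_le_pi hπd_pos.le (by linarith) (by linarith)
  -- key equivalence: a*c < 1 ↔ p < 1/c^d
  have hkey : a * c < 1 ↔ p < 1 / c ^ d := by
    rw [lt_div_iff₀ (by positivity), ← had]
    constructor
    · intro h
      have h' : (a * c) ^ d < 1 ^ d := pow_lt_pow_left₀ h (by positivity) (by omega)
      calc a ^ d * c ^ d = (a * c) ^ d := by ring
        _ < 1 ^ d := h'
        _ = 1 := one_pow d
    · intro h
      by_contra hcon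
      push_neg at hcon
      have h' : (1:ℝ) ^ d ≤ (a * c) ^ d := pow_le_pow_left₀ (by norm_num) hcon d
      have : (1:ℝ) ≤ a ^ d * c ^ d := by
        calc (1:ℝ) = 1 ^ d := (one_pow d).symm
          _ ≤ (a * c) ^ d := h'
          _ = a ^ d * c ^ d := by ring
      linarith
  have hkey2 : 1 / c ^ d < p → 1 < a * c := by
    intro h
    rw [div_lt_iff₀ (by positivity), ← had] at h
    by_contra hcon
    push_neg at hcon
    have h1 : (a * c) ^ d ≤ 1 ^ d := pow_le_pow_left₀ (by positivity) hcon d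
    have : a ^ d * c ^ d ≤ 1 := by
      calc a ^ d * c ^ d = (a * c) ^ d := by ring
        _ ≤ 1 ^ d := h1
        _ = 1 := one_pow d
    linarith
  have hzero : ((⟨0, by omega⟩ : Fin d) : ℕ) = 0 := rfl
  have hθ0 : (2 * (((⟨0, by omega⟩ : Fin d) : ℕ) : ℝ) + 1) * Real.pi / d = Real.pi / d := by
    rw [hzero]; push_cast; ring
  constructor
  · constructor
    · intro h
      have h0 := h ⟨0, by omega⟩
      rw [hre, hθ0] at h0
      exact hkey.mp (by linarith)
    · intro h k
      rw [hre]
      have h1 : a * c < 1 := hkey.mpr h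
      have h2 : a * Real.cos ((2 * (k:ℕ) + 1) * Real.pi / d) ≤ a * c :=
        mul_le_mul_of_nonneg_left (hcosle k) hapos.le
      linarith
  · intro h
    refine ⟨⟨0, by omega⟩, ?_⟩
    rw [hre, hθ0]
    have h1 : 1 < a * c := hkey2 h
    linarith
end
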